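/- arXiv:1207.2102 — 2 statements merged into one kernel-verified Lean document; each statement's English description precedes it below -/
import Mathlib

section
/- There are no rational numbers x1,x2,x3,d1,d2,d3 satisfying the Euler factor equations p̃2 = p̃3 = p̃4 = p̃5 = p̃6 = p̃7 = p̃8 = 0 such that the 3×2 matrix N1 with rows (1, d_i) has rank 1 and the 3×2 matrix N2 with rows (1, x_i) has rank 2. -/
/-!
A rank-one `N1` means `d1 = d2 = d3 =: d`, while a rank-two `N2` means the `x_i` are not all
equal. With a common `d`, writing `S = x1² + x2² + x3²`, the equation `p̃2 = 0` reads `3d² = 2S`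
and `p̃6 = 0` reads `S² - Σ x_i⁴ = d² S`; together `S² = 3 Σ x_i⁴`, the equality case of
Cauchy–Schwarz, so `x1² = x2² = x3²`. This common value is nonzero (else all `x_i` vanish), and then
`d² = 2 x1²` makes `2` a rational square.
-/

open Matrix

lemma Rat.not_isSquare_two : ¬ IsSquare (2 : ℚ) := by
  rintro ⟨q, hq⟩
  have hsqrt := (Rat.exists_mul_self 2).mp ⟨q, hq.symm⟩
  norm_num [Rat.sqrt] at hsqrt

theorem eq_and_eq_of_sq_add_add_eq_three_mul {R : Type*} [CommRing R] [LinearOrder R]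
    [IsStrictOrderedRing R] {a b c : R} (h : (a + b + c) ^ 2 = 3 * (a ^ 2 + b ^ 2 + c ^ 2)) :
    a = b ∧ a = c := by
  have hsum : (a - b) ^ 2 + (b - c) ^ 2 + (c - a) ^ 2 = 0 := by linear_combination -h
  constructor <;> nlinarith [sq_nonneg (a - b), sq_nonneg (b - c), sq_nonneg (c - a)]

theorem Matrix.rank_of_one_cons_eq_two_iff {K ι : Type*} [Field K] [Nonempty ι] (v : ι → K) :
    (Matrix.of fun i => ![(1 : K), v i]).rank = 2 ↔ ∃ i j, v i ≠ v j := by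
  have hcols : (Matrix.of fun i => ![(1 : K), v i]).col = ![fun _ => 1, v] := by
    ext j i; fin_cases j <;> rfl
  rw [rank_eq_finrank_span_cols, hcols, ← Set.finrank, eq_comm,
    show 2 = Fintype.card (Fin 2) from rfl, ← linearIndependent_iff_card_eq_finrank_span,
    LinearIndependent.pair_iff' (Function.ne_iff.mpr ⟨Classical.arbitrary ι, one_ne_zero⟩)]
  constructor
  · intro hind
    by_contra! hconst
    exact hind (v (Classical.arbitrary ι)) (funext fun i => by simp [hconst _ i])
  · rintro ⟨i, j, hij⟩ a rfl
    simp at hij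

theorem Matrix.rank_three_by_two_eq_two_iff {K : Type*} [Field K] (a b c : K) :
    (!![(1 : K), a; 1, b; 1, c]).rank = 2 ↔ ¬ (a = b ∧ a = c) := by
  have hmat : !![(1 : K), a; 1, b; 1, c] = Matrix.of fun i => ![(1 : K), ![a, b, c] i] := by
    ext i j; fin_cases i <;> fin_cases j <;> rfl
  rw [hmat, rank_of_one_cons_eq_two_iff]
  constructor
  · rintro ⟨i, j, hij⟩ ⟨rfl, rfl⟩
    fin_cases i <;> fin_cases j <;> simp at hij
  · intro h
    by_contra! hall
    exact h ⟨hall 0 1, hall 0 2⟩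

theorem no_solution_rankN1_one_rankN2_two_euler :
    ¬ ∃ x1 x2 x3 d1 d2 d3 : ℚ,
      (x2^2 + x3^2 - d1^2) + (x3^2 + x1^2 - d2^2) + (x1^2 + x2^2 - d3^2) = 0 ∧
      d1 * (x2^2 + x3^2 - d1^2) + d2 * (x3^2 + x1^2 - d2^2) + d3 * (x1^2 + x2^2 - d3^2) = 0 ∧
      x1 * (x2^2 + x3^2 - d1^2) + x2 * (x3^2 + x1^2 - d2^2) + x3 * (x1^2 + x2^2 - d3^2) = 0 ∧
      x1 * d1 * (x2^2 + x3^2 - d1^2) + x2 * d2 * (x3^2 + x1^2 - d2^2) + x3 * d3 * (x1^2 + x2^2 - d3^2) = 0 ∧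
      x1^2 * (x2^2 + x3^2 - d1^2) + x2^2 * (x3^2 + x1^2 - d2^2) + x3^2 * (x1^2 + x2^2 - d3^2) = 0 ∧
      d1^2 * (x2^2 + x3^2 - d1^2) + d2^2 * (x3^2 + x1^2 - d2^2) + d3^2 * (x1^2 + x2^2 - d3^2) = 0 ∧
      x1^2 * d1^2 * (x2^2 + x3^2 - d1^2) + x2^2 * d2^2 * (x3^2 + x1^2 - d2^2) + x3^2 * d3^2 * (x1^2 + x2^2 - d3^2) = 0 ∧
      (!![(1:ℚ), d1; 1, d2; 1, d3]).rank = 1 ∧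
      (!![(1:ℚ), x1; 1, x2; 1, x3]).rank = 2 := by
  rintro ⟨x1, x2, x3, d, d2, d3, hp2, -, -, -, hp6, -, -, hN1, hN2⟩
  obtain ⟨rfl, rfl⟩ : d = d2 ∧ d = d3 := by
    by_contra hd
    rw [(rank_three_by_two_eq_two_iff d d2 d3).mpr hd] at hN1
    exact absurd hN1 (by norm_num)
  have hx := (rank_three_by_two_eq_two_iff x1 x2 x3).mp hN2
  obtain ⟨h12, h13⟩ := eq_and_eq_of_sq_add_add_eq_three_mul (a := x1 ^ 2) (b := x2 ^ 2) (c := x3 ^ 2)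
    (by linear_combination 3 * hp6 - (x1 ^ 2 + x2 ^ 2 + x3 ^ 2) * hp2)
  have hd : d ^ 2 = 2 * x1 ^ 2 := by linarith
  have hx1 : x1 ≠ 0 := by
    rintro rfl
    exact hx ⟨(pow_eq_zero_iff two_ne_zero).mp (by linarith : x2 ^ 2 = 0) |>.symm,
      (pow_eq_zero_iff two_ne_zero).mp (by linarith : x3 ^ 2 = 0) |>.symm⟩
  exact Rat.not_isSquare_two ⟨d / x1, by field_simp; linarith⟩
end

section
/- There are no rational numbers x1,x2,x3,d1,d2,d3,L with x1 > 0, x2 > 0, x3 > 0, d1 > 0, d2 > 0, d3 > 0 satisfying the perfect cuboid factor equations p̃1 = p̃2 = p̃3 = p̃4 = p̃5 = p̃6 = p̃7 = p̃8 = 0 such that the 3×2 matrix N1 with rows (1, d_i) has rank 2, the 3×2 matrix N2 with rows (1, x_i) has rank 2, and the 3×7 matrix N with rows (1, d_i, x_i, x_i·d_i, x_i², d_i², x_i²·d_i²) has rank N ≤ 2. -/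
open Matrix

/-!
Rank `N ≤ 2` makes every 3×3 minor of `N` vanish. The minor on the columns `1, dᵢ, dᵢ²` is a
Vandermonde determinant, so two of the `dᵢ` coincide, say `d₁ = d₂`; since `rank N₁ = 2` the third
one differs, and then the minor on the columns `1, dᵢ, xᵢ` forces `x₁ = x₂`. Now `p₁ = p₂`, and
`p̃₂ = p̃₃ = 0` become `2 p₁ + p₃ = 0` and `2 d₁ p₁ + d₃ p₃ = 0`, whence `p₃ = 2 x₁² - d₃² = 0`:
the diagonal of a square face would be rational, i.e. `√2 ∈ ℚ`.
-/

theorem Matrix.det_submatrix_eq_zero_of_rank_lt {K m n k : Type*} [Field K] [Fintype n]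
    [Fintype k] [DecidableEq k] (A : Matrix m n K) (hA : A.rank < Fintype.card k)
    (r : k → m) (c : k → n) : (A.submatrix r c).det = 0 := by
  by_contra h
  have hfull := rank_of_isUnit _ ((isUnit_iff_isUnit_det _).2 (isUnit_iff_ne_zero.2 h))
  have := rank_submatrix_le A r c
  omega

theorem Rat.sq_ne_two_mul_sq {x : ℚ} (hx : x ≠ 0) (e : ℚ) : e ^ 2 ≠ 2 * x ^ 2 := by
  intro h
  have h2 : ¬ IsSquare (2 : ℚ) := by
    rw [← Nat.cast_ofNat, Rat.isSquare_natCast_iff]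
    exact Nat.prime_two.not_isSquare
  exact h2 ⟨e / x, by field_simp; linear_combination -h⟩

theorem Matrix.rank_of_three_equal_rows_le_one {K : Type*} [Field K] (a b : K) :
    (!![a, b; a, b; a, b]).rank ≤ 1 := by
  have : !![a, b; a, b; a, b] = vecMulVec ![1, 1, 1] ![a, b] := by
    ext i j; fin_cases i <;> fin_cases j <;> simp [vecMulVec]
  exact this ▸ rank_vecMulVec_le _ _

theorem cuboid_minors_eq_zero {x1 x2 x3 d1 d2 d3 : ℚ}
    (h : (!![(1:ℚ), d1, x1, x1*d1, x1^2, d1^2, x1^2*d1^2;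
        1, d2, x2, x2*d2, x2^2, d2^2, x2^2*d2^2;
        1, d3, x3, x3*d3, x3^2, d3^2, x3^2*d3^2]).rank ≤ 2) :
    (d2 - d1) * (d3 - d1) * (d3 - d2) = 0 ∧
      (d2 - d1) * (x3 - x1) - (d3 - d1) * (x2 - x1) = 0 := by
  have hlt := Nat.lt_of_le_of_lt h (by simp : 2 < Fintype.card (Fin 3))
  have hV := det_submatrix_eq_zero_of_rank_lt _ hlt id ![0, 1, 5]
  have hM := det_submatrix_eq_zero_of_rank_lt _ hlt id ![0, 1, 2]
  simp only [Fin.isValue, det_fin_three, submatrix_apply, id_eq, cons_val_zero, of_apply,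
    cons_val', cons_val_fin_one, cons_val_one, one_mul, cons_val, mul_one] at hV hM
  constructor
  · linear_combination hV
  · linear_combination hM

theorem false_of_d1_eq_d2_of_ne_d3 {x1 x2 x3 d1 d2 d3 : ℚ} (hx1 : x1 ≠ 0) (h12 : d1 = d2)
    (h13 : d1 ≠ d3) (hminor : (d2 - d1) * (x3 - x1) - (d3 - d1) * (x2 - x1) = 0)
    (hp2 : (x2^2 + x3^2 - d1^2) + (x3^2 + x1^2 - d2^2) + (x1^2 + x2^2 - d3^2) = 0)
    (hp3 : d1 * (x2^2 + x3^2 - d1^2) + d2 * (x3^2 + x1^2 - d2^2) +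
      d3 * (x1^2 + x2^2 - d3^2) = 0) : False := by
  subst h12
  have hx12 : x1 = x2 := by
    have : (d3 - d1) * (x1 - x2) = 0 := by linear_combination hminor
    exact sub_eq_zero.1 ((mul_eq_zero.1 this).resolve_left (sub_ne_zero.2 h13.symm))
  subst hx12
  have hp3_factored : (d1 - d3) * (2 * x1^2 - d3^2) = 0 := by linear_combination d1 * hp2 - hp3
  have hsq : 2 * x1^2 - d3^2 = 0 := (mul_eq_zero.1 hp3_factored).resolve_left (sub_ne_zero.2 h13)
  exact Rat.sq_ne_two_mul_sq hx1 d3 (by linear_combination -hsq)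

theorem no_positive_solution_rank_two_two_perfect :
    ¬ ∃ x1 x2 x3 d1 d2 d3 L : ℚ,
      0 < x1 ∧
      0 < x2 ∧
      0 < x3 ∧
      0 < d1 ∧
      0 < d2 ∧
      0 < d3 ∧
      (x1^2 + x2^2 + x3^2 - L^2) = 0 ∧
      (x2^2 + x3^2 - d1^2) + (x3^2 + x1^2 - d2^2) + (x1^2 + x2^2 - d3^2) = 0 ∧
      d1 * (x2^2 + x3^2 - d1^2) + d2 * (x3^2 + x1^2 - d2^2) + d3 * (x1^2 + x2^2 - d3^2) = 0 ∧
      x1 * (x2^2 + x3^2 - d1^2) + x2 * (x3^2 + x1^2 - d2^2) + x3 * (x1^2 + x2^2 - d3^2) = 0 ∧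
      x1 * d1 * (x2^2 + x3^2 - d1^2) + x2 * d2 * (x3^2 + x1^2 - d2^2) + x3 * d3 * (x1^2 + x2^2 - d3^2) = 0 ∧
      x1^2 * (x2^2 + x3^2 - d1^2) + x2^2 * (x3^2 + x1^2 - d2^2) + x3^2 * (x1^2 + x2^2 - d3^2) = 0 ∧
      d1^2 * (x2^2 + x3^2 - d1^2) + d2^2 * (x3^2 + x1^2 - d2^2) + d3^2 * (x1^2 + x2^2 - d3^2) = 0 ∧
      x1^2 * d1^2 * (x2^2 + x3^2 - d1^2) + x2^2 * d2^2 * (x3^2 + x1^2 - d2^2) + x3^2 * d3^2 * (x1^2 + x2^2 - d3^2) = 0 ∧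
      (!![(1:ℚ), d1; 1, d2; 1, d3]).rank = 2 ∧
      (!![(1:ℚ), x1; 1, x2; 1, x3]).rank = 2 ∧
      (!![(1:ℚ), d1, x1, x1*d1, x1^2, d1^2, x1^2*d1^2;
        1, d2, x2, x2*d2, x2^2, d2^2, x2^2*d2^2;
        1, d3, x3, x3*d3, x3^2, d3^2, x3^2*d3^2]).rank ≤ 2 := by
  rintro ⟨x1, x2, x3, d1, d2, d3, -, hx1, hx2, -, -, -, -, -, hp2, hp3, -, -, -, -, -, hN1, -, hN⟩
  have hd_not_const : ¬ (d1 = d2 ∧ d1 = d3) := by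
    rintro ⟨rfl, rfl⟩
    have := rank_of_three_equal_rows_le_one (1 : ℚ) d1
    omega
  obtain ⟨hV, hM⟩ := cuboid_minors_eq_zero hN
  have hd_pair : d1 = d2 ∨ d1 = d3 ∨ d2 = d3 := by
    simp only [mul_eq_zero, sub_eq_zero] at hV
    tauto
  rcases hd_pair with h12 | h13 | h23
  · exact false_of_d1_eq_d2_of_ne_d3 hx1.ne' h12 (fun h13 => hd_not_const ⟨h12, h13⟩) hM hp2 hp3
  · exact false_of_d1_eq_d2_of_ne_d3 (x2 := x3) (x3 := x2) (d2 := d3) (d3 := d2) hx1.ne' h13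
      (fun h12 => hd_not_const ⟨h12, h13⟩) (by linear_combination -hM) (by linear_combination hp2)
      (by linear_combination hp3)
  · exact false_of_d1_eq_d2_of_ne_d3 (x1 := x2) (x2 := x3) (x3 := x1) (d1 := d2) (d2 := d3)
      (d3 := d1) hx2.ne' h23 (fun h21 => hd_not_const ⟨h21.symm, h21.symm.trans h23⟩)
      (by linear_combination hM) (by linear_combination hp2) (by linear_combination hp3)
end
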